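/- Let $B, Z \in \mathbb{R}^{n \times m}$, set $A = B + Z$, and for $1 \le R \le \min\{n,m\}$ let $\widehat{U}_\perp \in \mathbb{R}^{n \times (n-R)}$ be an orthonormal basis of the orthogonal complement of the top-$R$ left singular subspace of $A$, with $\mathcal{P}_{\widehat{U}_\perp} = \widehat{U}_\perp \widehat{U}_\perp^\top$. Then $\|\mathcal{P}_{\widehat{U}_\perp} B\|_{\mathrm{F}} \le 3\sqrt{\sum_{j=R+1}^{\min\{n,m\}} \sigma_j^2(B)} + 2\min\{\sqrt{R}\,\|Z\|,\ \|Z\|_{\mathrm{F}}\}$. -/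

import Mathlib

open Matrix BigOperators Finset

/-- The `i`-th largest singular value (0-indexed) of a real matrix. -/
noncomputable def sv {m n : Type*} [Fintype m] [Fintype n] [DecidableEq n]
    (M : Matrix m n ℝ) (i : ℕ) : ℝ :=
  if hi : i < Fintype.card n then
    let ev : Fin (Fintype.card n) → ℝ :=
      (Matrix.isHermitian_conjTranspose_mul_self M).eigenvalues ∘ (Fintype.equivFin n).symm
    Real.sqrt ((ev ∘ Tuple.sort ev) (Fin.rev ⟨i, hi⟩))
  else 0

/-- Frobenius norm of a real matrix. -/
noncomputable def frob {m n : Type*} [Fintype m] [Fintype n]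
    (M : Matrix m n ℝ) : ℝ :=
  Real.sqrt (∑ i, ∑ j, (M i j) ^ 2)

namespace SVDProof

/-- Cauchy–Schwarz for dot products. -/
lemma dot_self_nonneg {ι : Type*} [Fintype ι] (x : ι → ℝ) : 0 ≤ x ⬝ᵥ x := by
  have : x ⬝ᵥ x = ∑ i, x i ^ 2 := by simp [dotProduct, pow_two]
  rw [this]; positivity

lemma dot_le_sqrt {ι : Type*} [Fintype ι] (x y : ι → ℝ) :
    x ⬝ᵥ y ≤ Real.sqrt (x ⬝ᵥ x) * Real.sqrt (y ⬝ᵥ y) := by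
  have h := Finset.sum_mul_sq_le_sq_mul_sq Finset.univ x y
  have h1 : x ⬝ᵥ y ≤ Real.sqrt ((x ⬝ᵥ y) ^ 2) := by
    rw [Real.sqrt_sq_eq_abs]; exact le_abs_self _
  refine h1.trans ?_
  rw [← Real.sqrt_mul (dot_self_nonneg x)]
  apply Real.sqrt_le_sqrt
  have hx : x ⬝ᵥ x = ∑ i, x i ^ 2 := by simp [dotProduct, pow_two]
  have hy : y ⬝ᵥ y = ∑ i, y i ^ 2 := by simp [dotProduct, pow_two]
  rw [hx, hy]
  simpa [dotProduct] using h

/-- Minkowski for square sums. -/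
lemma sqrt_sum_sq_add_le {ι : Type*} (s : Finset ι) (f g : ι → ℝ) :
    Real.sqrt (∑ i ∈ s, (f i + g i) ^ 2)
      ≤ Real.sqrt (∑ i ∈ s, f i ^ 2) + Real.sqrt (∑ i ∈ s, g i ^ 2) := by
  set F := Real.sqrt (∑ i ∈ s, f i ^ 2) with hF
  set G := Real.sqrt (∑ i ∈ s, g i ^ 2) with hG
  have hF0 : 0 ≤ F := Real.sqrt_nonneg _
  have hG0 : 0 ≤ G := Real.sqrt_nonneg _
  have hFsq : F ^ 2 = ∑ i ∈ s, f i ^ 2 := Real.sq_sqrt (by positivity)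
  have hGsq : G ^ 2 = ∑ i ∈ s, g i ^ 2 := Real.sq_sqrt (by positivity)
  have hfg : ∑ i ∈ s, f i * g i ≤ F * G := by
    have h1 : ∑ i ∈ s, f i * g i ≤ Real.sqrt ((∑ i ∈ s, f i * g i) ^ 2) := by
      rw [Real.sqrt_sq_eq_abs]; exact le_abs_self _
    refine h1.trans ?_
    rw [hF, hG, ← Real.sqrt_mul (by positivity)]
    exact Real.sqrt_le_sqrt (Finset.sum_mul_sq_le_sq_mul_sq s f g)
  have key : ∑ i ∈ s, (f i + g i) ^ 2 ≤ (F + G) ^ 2 := by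
    have : ∑ i ∈ s, (f i + g i) ^ 2
        = (∑ i ∈ s, f i ^ 2) + 2 * (∑ i ∈ s, f i * g i) + ∑ i ∈ s, g i ^ 2 := by
      rw [mul_sum, ← sum_add_distrib, ← sum_add_distrib]
      congr 1; ext i; ring
    rw [this]
    nlinarith [hfg]
  calc Real.sqrt (∑ i ∈ s, (f i + g i) ^ 2) ≤ Real.sqrt ((F + G) ^ 2) :=
        Real.sqrt_le_sqrt key
    _ = F + G := Real.sqrt_sq (by positivity)

lemma frob_nonneg {n m : Type*} [Fintype n] [Fintype m] (M : Matrix n m ℝ) : 0 ≤ frob M :=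
  Real.sqrt_nonneg _

lemma frob_sq {n m : Type*} [Fintype n] [Fintype m] (M : Matrix n m ℝ) :
    frob M ^ 2 = ∑ i, ∑ j, (M i j) ^ 2 :=
  Real.sq_sqrt (by positivity)

lemma frob_eq_sqrt_sum_col {n m : Type*} [Fintype n] [Fintype m] (M : Matrix n m ℝ) :
    frob M = Real.sqrt (∑ j, (fun i => M i j) ⬝ᵥ (fun i => M i j)) := by
  rw [frob, Finset.sum_comm]
  congr 1
  refine Finset.sum_congr rfl fun j _ => Finset.sum_congr rfl fun i _ => ?_
  simp [dotProduct, pow_two]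

lemma mulVec_dot_of_orth {n : Type*} [Fintype n] [DecidableEq n] {W : Matrix n n ℝ}
    (hW : Wᵀ * W = 1) (x : n → ℝ) : (W *ᵥ x) ⬝ᵥ (W *ᵥ x) = x ⬝ᵥ x := by
  calc (W *ᵥ x) ⬝ᵥ (W *ᵥ x) = (x ᵥ* Wᵀ) ⬝ᵥ (W *ᵥ x) := by rw [vecMul_transpose]
    _ = ((x ᵥ* Wᵀ) ᵥ* W) ⬝ᵥ x := by rw [dotProduct_mulVec]
    _ = (x ᵥ* (Wᵀ * W)) ⬝ᵥ x := by rw [vecMul_vecMul]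
    _ = x ⬝ᵥ x := by rw [hW, vecMul_one]

lemma frob_mul_left_orth {n m : Type*} [Fintype n] [Fintype m] [DecidableEq n]
    {W : Matrix n n ℝ} (hW : Wᵀ * W = 1) (M : Matrix n m ℝ) :
    frob (W * M) = frob M := by
  rw [frob_eq_sqrt_sum_col, frob_eq_sqrt_sum_col M]
  congr 1
  refine Finset.sum_congr rfl fun j _ => ?_
  have hcol : (fun i => (W * M) i j) = W *ᵥ (fun k => M k j) := by
    ext i; simp [Matrix.mul_apply, Matrix.mulVec, dotProduct]
  rw [hcol, mulVec_dot_of_orth hW]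

lemma frob_transpose {n m : Type*} [Fintype n] [Fintype m] (M : Matrix n m ℝ) :
    frob Mᵀ = frob M := by
  rw [frob, frob, Finset.sum_comm]
  simp [Matrix.transpose_apply]

lemma frob_mul_right_orth {n m : Type*} [Fintype n] [Fintype m] [DecidableEq m]
    {V : Matrix m m ℝ} (hV : V * Vᵀ = 1) (M : Matrix n m ℝ) :
    frob (M * V) = frob M := by
  have h1 : (M * V)ᵀ = Vᵀ * Mᵀ := Matrix.transpose_mul M V
  have h2 : (Vᵀ)ᵀ * Vᵀ = 1 := by rw [Matrix.transpose_transpose]; exact hV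
  rw [← frob_transpose (M * V), h1, frob_mul_left_orth h2, frob_transpose]

lemma frob_diag_left_le {n m : Type*} [Fintype n] [Fintype m] [DecidableEq n]
    {d : n → ℝ} (hd : ∀ i, 0 ≤ d i) (hd1 : ∀ i, d i ≤ 1) (M : Matrix n m ℝ) :
    frob (Matrix.diagonal d * M) ≤ frob M := by
  apply Real.sqrt_le_sqrt
  refine Finset.sum_le_sum fun i _ => Finset.sum_le_sum fun j _ => ?_
  rw [Matrix.diagonal_mul, mul_pow]
  exact mul_le_of_le_one_left (sq_nonneg _) (by nlinarith [hd i, hd1 i])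

lemma frob_diag_right_le {n m : Type*} [Fintype n] [Fintype m] [DecidableEq m]
    {d : m → ℝ} (hd : ∀ i, 0 ≤ d i) (hd1 : ∀ i, d i ≤ 1) (M : Matrix n m ℝ) :
    frob (M * Matrix.diagonal d) ≤ frob M := by
  apply Real.sqrt_le_sqrt
  refine Finset.sum_le_sum fun i _ => Finset.sum_le_sum fun j _ => ?_
  rw [Matrix.mul_diagonal, mul_pow]
  rw [mul_comm]
  exact mul_le_of_le_one_left (sq_nonneg _) (by nlinarith [hd j, hd1 j])

lemma frob_add_le {n m : Type*} [Fintype n] [Fintype m] (X Y : Matrix n m ℝ) :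
    frob (X + Y) ≤ frob X + frob Y := by
  have h := sqrt_sum_sq_add_le (Finset.univ : Finset (n × m))
    (fun p => X p.1 p.2) (fun p => Y p.1 p.2)
  simpa [frob, Fintype.sum_prod_type, Matrix.add_apply] using h

lemma frob_neg {n m : Type*} [Fintype n] [Fintype m] (X : Matrix n m ℝ) :
    frob (-X) = frob X := by
  simp [frob]

end SVDProof
section Chunk2

open Matrix BigOperators Finset
namespace SVDProof

lemma sv_nonneg {n m : ℕ} (M : Matrix (Fin n) (Fin m) ℝ) (i : ℕ) : 0 ≤ sv M i := by
  unfold sv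
  split
  · exact Real.sqrt_nonneg _
  · exact le_refl 0

lemma sv_antitone {n m : ℕ} (M : Matrix (Fin n) (Fin m) ℝ) {i j : ℕ} (hij : i ≤ j) :
    sv M j ≤ sv M i := by
  unfold sv
  by_cases hj : j < Fintype.card (Fin m)
  · have hi : i < Fintype.card (Fin m) := lt_of_le_of_lt hij hj
    rw [dif_pos hj, dif_pos hi]
    apply Real.sqrt_le_sqrt
    have := Tuple.monotone_sort
      ((Matrix.isHermitian_conjTranspose_mul_self M).eigenvalues ∘ (Fintype.equivFin (Fin m)).symm)
    apply this
    apply Fin.rev_le_rev.mpr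
    exact hij
  · rw [dif_neg hj]
    exact sv_nonneg M i

end SVDProof
end Chunk2
section Chunk3
open Matrix BigOperators Finset
namespace SVDProof

lemma svd_decomp {n m : ℕ} (M : Matrix (Fin n) (Fin m) ℝ) :
    ∃ V : Matrix (Fin m) (Fin m) ℝ, Vᵀ * V = 1 ∧ V * Vᵀ = 1 ∧
      Mᵀ * M = V * Matrix.diagonal (fun j : Fin m => sv M (j : ℕ) ^ 2) * Vᵀ := by
  have hH : (Mᴴ * M).IsHermitian := Matrix.isHermitian_conjTranspose_mul_self M
  set e := Fintype.equivFin (Fin m) with he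
  set ev : Fin (Fintype.card (Fin m)) → ℝ := hH.eigenvalues ∘ e.symm with hev
  have hcard : m = Fintype.card (Fin m) := (Fintype.card_fin m).symm
  set σ : Equiv.Perm (Fin m) :=
    (finCongr hcard).trans ((Fin.revPerm).trans ((Tuple.sort ev).trans e.symm)) with hσ
  set U : Matrix (Fin m) (Fin m) ℝ := (hH.eigenvectorUnitary : Matrix (Fin m) (Fin m) ℝ) with hU
  have hUorth : Uᵀ * U = 1 := by
    have := Matrix.mem_unitaryGroup_iff'.mp hH.eigenvectorUnitary.2
    rw [hU]
    simpa [Matrix.star_eq_conjTranspose, Matrix.conjTranspose_eq_transpose_of_trivial] using this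
  have hspec : Mᵀ * M = U * Matrix.diagonal hH.eigenvalues * Uᵀ := by
    have h := hH.spectral_theorem
    have hMT : Mᴴ = Mᵀ := Matrix.conjTranspose_eq_transpose_of_trivial M
    calc Mᵀ * M = Mᴴ * M := by rw [hMT]
      _ = U * Matrix.diagonal (RCLike.ofReal ∘ hH.eigenvalues) * star U := h
      _ = U * Matrix.diagonal hH.eigenvalues * Uᵀ := by
          have h1 : Uᴴ = Uᵀ := Matrix.conjTranspose_eq_transpose_of_trivial U
          rw [Matrix.star_eq_conjTranspose, h1]
          have h2 : (RCLike.ofReal ∘ hH.eigenvalues : Fin m → ℝ) = hH.eigenvalues := by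
            ext j; simp
          rw [h2]
  have hsv : ∀ j : Fin m, sv M (j : ℕ) ^ 2 = hH.eigenvalues (σ j) := by
    intro j
    have hj : (j : ℕ) < Fintype.card (Fin m) := by rw [← hcard]; exact j.isLt
    have hnn : 0 ≤ ev (Tuple.sort ev (Fin.rev ⟨(j : ℕ), hj⟩)) :=
      Matrix.eigenvalues_conjTranspose_mul_self_nonneg M _
    have : sv M (j : ℕ) = Real.sqrt (ev (Tuple.sort ev (Fin.rev ⟨(j : ℕ), hj⟩))) := by
      rw [sv, dif_pos hj]
      rfl
    rw [this, Real.sq_sqrt hnn]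
    have hjj : Fin.cast hcard j = (⟨(j : ℕ), hj⟩ : Fin (Fintype.card (Fin m))) := rfl
    simp [hσ, hev, Function.comp, hjj]
  refine ⟨U.submatrix id ⇑σ, ?_, ?_, ?_⟩
  · ext a b
    have : ((U.submatrix id ⇑σ)ᵀ * U.submatrix id ⇑σ) a b = (Uᵀ * U) (σ a) (σ b) := by
      simp [Matrix.mul_apply]
    rw [this, hUorth]
    by_cases hab : a = b
    · subst hab; simp
    · rw [Matrix.one_apply_ne (fun h => hab (σ.injective h)), Matrix.one_apply_ne hab]
  · rw [mul_eq_one_comm]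
    ext a b
    have : ((U.submatrix id ⇑σ)ᵀ * U.submatrix id ⇑σ) a b = (Uᵀ * U) (σ a) (σ b) := by
      simp [Matrix.mul_apply]
    rw [this, hUorth]
    by_cases hab : a = b
    · subst hab; simp
    · rw [Matrix.one_apply_ne (fun h => hab (σ.injective h)), Matrix.one_apply_ne hab]
  · rw [hspec]
    ext a b
    rw [Matrix.mul_apply, Matrix.mul_apply]
    simp only [Matrix.mul_diagonal, Matrix.transpose_apply, Matrix.submatrix_apply, id_eq]
    rw [← Equiv.sum_comp σ (fun k => U a k * hH.eigenvalues k * U b k)]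
    refine Finset.sum_congr rfl fun k _ => ?_
    rw [hsv k]

end SVDProof
end Chunk3
section Chunk4
open Matrix BigOperators Finset
namespace SVDProof

lemma dot_sandwich {n m : Type*} [Fintype n] [Fintype m] (X : Matrix n m ℝ)
    (u : n → ℝ) (v : m → ℝ) : u ⬝ᵥ (X *ᵥ v) = (Xᵀ *ᵥ u) ⬝ᵥ v := by
  rw [Matrix.dotProduct_mulVec, Matrix.mulVec_transpose]

lemma quad_eq {n m : ℕ} {M : Matrix (Fin n) (Fin m) ℝ} {V : Matrix (Fin m) (Fin m) ℝ}
    {d : Fin m → ℝ} (hd : Mᵀ * M = V * Matrix.diagonal d * Vᵀ) (v : Fin m → ℝ) :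
    (M *ᵥ v) ⬝ᵥ (M *ᵥ v) = ∑ k, d k * ((Vᵀ *ᵥ v) k) ^ 2 := by
  have h1 : (M *ᵥ v) ⬝ᵥ (M *ᵥ v) = ((Mᵀ * M) *ᵥ v) ⬝ᵥ v := by
    rw [dot_sandwich, Matrix.mulVec_mulVec]
  rw [h1, hd]
  have h2 : (V * Matrix.diagonal d * Vᵀ) *ᵥ v = V *ᵥ (Matrix.diagonal d *ᵥ (Vᵀ *ᵥ v)) := by
    rw [Matrix.mulVec_mulVec, Matrix.mulVec_mulVec]
  rw [h2, dotProduct_comm, dot_sandwich, dotProduct_comm]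
  unfold dotProduct
  refine Finset.sum_congr rfl fun k _ => ?_
  rw [Matrix.mulVec_diagonal]
  ring

lemma dot_self_of_coords {m : ℕ} {V : Matrix (Fin m) (Fin m) ℝ}
    (hV2 : V * Vᵀ = 1) (v : Fin m → ℝ) :
    v ⬝ᵥ v = ∑ k, ((Vᵀ *ᵥ v) k) ^ 2 := by
  have h1 : (Vᵀ)ᵀ * Vᵀ = 1 := by rw [Matrix.transpose_transpose]; exact hV2
  have h2 := mulVec_dot_of_orth h1 v
  rw [← h2]
  simp [dotProduct, pow_two]

lemma dot_norm_add_le {ι : Type*} [Fintype ι] (a b : ι → ℝ) :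
    Real.sqrt ((a + b) ⬝ᵥ (a + b)) ≤ Real.sqrt (a ⬝ᵥ a) + Real.sqrt (b ⬝ᵥ b) := by
  have h := sqrt_sum_sq_add_le (Finset.univ : Finset ι) a b
  have e1 : (a + b) ⬝ᵥ (a + b) = ∑ i, (a i + b i) ^ 2 := by
    simp [dotProduct, pow_two]
  have e2 : a ⬝ᵥ a = ∑ i, a i ^ 2 := by simp [dotProduct, pow_two]
  have e3 : b ⬝ᵥ b = ∑ i, b i ^ 2 := by simp [dotProduct, pow_two]
  rw [e1, e2, e3]
  exact h

/-- Key min–max style bound for singular values. -/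
lemma sv_le_bound {n m : ℕ} (M : Matrix (Fin n) (Fin m) ℝ) (k : ℕ) (c : ℝ) (hc : 0 ≤ c)
    {E : Type} [AddCommGroup E] [Module ℝ E] [FiniteDimensional ℝ E]
    (F : (Fin m → ℝ) →ₗ[ℝ] E) (hE : Module.finrank ℝ E ≤ k)
    (hF : ∀ v : Fin m → ℝ, F v = 0 →
      Real.sqrt ((M *ᵥ v) ⬝ᵥ (M *ᵥ v)) ≤ c * Real.sqrt (v ⬝ᵥ v)) :
    sv M k ≤ c := by
  rcases lt_or_ge k m with hk | hk
  swap
  · have h0 : sv M k = 0 := by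
      rw [sv, dif_neg]
      rw [Fintype.card_fin]
      omega
    rw [h0]; exact hc
  obtain ⟨V, hV1, hV2, hdec⟩ := svd_decomp M
  set T : (Fin m → ℝ) →ₗ[ℝ] (Fin (m - (k+1)) → ℝ) :=
    (LinearMap.funLeft ℝ ℝ (fun l : Fin (m - (k+1)) =>
      (⟨k + 1 + (l : ℕ), by omega⟩ : Fin m))).comp (Matrix.mulVecLin Vᵀ) with hT
  set G := F.prod T with hGdef
  have hker : LinearMap.ker G ≠ ⊥ := by
    intro hbot
    have hinj : Function.Injective G := LinearMap.ker_eq_bot.mp hbot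
    have hle := LinearMap.finrank_le_finrank_of_injective hinj
    rw [Module.finrank_fintype_fun_eq_card, Fintype.card_fin] at hle
    have h2 : Module.finrank ℝ (E × (Fin (m - (k+1)) → ℝ))
        = Module.finrank ℝ E + (m - (k+1)) := by
      rw [Module.finrank_prod, Module.finrank_fintype_fun_eq_card, Fintype.card_fin]
    rw [h2] at hle
    omega
  obtain ⟨v, hvmem, hvne⟩ := Submodule.exists_mem_ne_zero_of_ne_bot hker
  have hGv : G v = 0 := LinearMap.mem_ker.mp hvmem
  have hFv : F v = 0 := by
    have := congrArg Prod.fst hGv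
    simpa [hGdef, LinearMap.prod_apply] using this
  have hTv : T v = 0 := by
    have := congrArg Prod.snd hGv
    simpa [hGdef, LinearMap.prod_apply] using this
  have hczero : ∀ l : Fin m, k < (l : ℕ) → (Vᵀ *ᵥ v) l = 0 := by
    intro l hl
    have hl' : (l : ℕ) - (k+1) < m - (k+1) := by omega
    have hidx : (⟨k + 1 + ((l : ℕ) - (k+1)), by omega⟩ : Fin m) = l := by
      ext
      simp only [Fin.val_mk]
      omega
    have h3 := congrFun hTv ⟨(l : ℕ) - (k+1), hl'⟩
    simp only [hT, LinearMap.comp_apply, LinearMap.funLeft_apply, Matrix.mulVecLin_apply,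
      Pi.zero_apply] at h3
    rw [← hidx]
    exact h3
  have hquad := quad_eq hdec v
  have hcoord := dot_self_of_coords hV2 v
  have hvv : 0 < v ⬝ᵥ v := by
    obtain ⟨i, hi⟩ := Function.ne_iff.mp hvne
    have h1 : 0 < v i * v i := mul_self_pos.mpr hi
    have h2 : v i * v i ≤ v ⬝ᵥ v := by
      unfold dotProduct
      exact Finset.single_le_sum (fun j _ => mul_self_nonneg (v j)) (Finset.mem_univ i)
    linarith
  have hlow : sv M k ^ 2 * (v ⬝ᵥ v) ≤ (M *ᵥ v) ⬝ᵥ (M *ᵥ v) := by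
    rw [hquad, hcoord, Finset.mul_sum]
    refine Finset.sum_le_sum fun l _ => ?_
    rcases le_or_gt (l : ℕ) k with hlk | hlk
    · have h1 : sv M k ≤ sv M (l : ℕ) := sv_antitone M hlk
      have h2 : sv M k ^ 2 ≤ sv M (l : ℕ) ^ 2 :=
        pow_le_pow_left₀ (sv_nonneg M k) h1 2
      nlinarith [sq_nonneg ((Vᵀ *ᵥ v) l)]
    · rw [hczero l hlk]
      simp
  have hup : (M *ᵥ v) ⬝ᵥ (M *ᵥ v) ≤ c ^ 2 * (v ⬝ᵥ v) := by
    have h1 := hF v hFv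
    have h2 : (M *ᵥ v) ⬝ᵥ (M *ᵥ v) = Real.sqrt ((M *ᵥ v) ⬝ᵥ (M *ᵥ v)) ^ 2 :=
      (Real.sq_sqrt (dot_self_nonneg _)).symm
    rw [h2]
    calc Real.sqrt ((M *ᵥ v) ⬝ᵥ (M *ᵥ v)) ^ 2 ≤ (c * Real.sqrt (v ⬝ᵥ v)) ^ 2 :=
          pow_le_pow_left₀ (Real.sqrt_nonneg _) h1 2
      _ = c ^ 2 * (v ⬝ᵥ v) := by
          rw [mul_pow, Real.sq_sqrt (dot_self_nonneg _)]
  have hsq : sv M k ^ 2 ≤ c ^ 2 := by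
    have := hlow.trans hup
    exact le_of_mul_le_mul_right (by linarith [this]) hvv
  calc sv M k = Real.sqrt (sv M k ^ 2) := (Real.sqrt_sq (sv_nonneg M k)).symm
    _ ≤ Real.sqrt (c ^ 2) := Real.sqrt_le_sqrt hsq
    _ = c := Real.sqrt_sq hc

end SVDProof
end Chunk4
section Chunk5
open Matrix BigOperators Finset
namespace SVDProof

noncomputable def coordMap {m : ℕ} (V : Matrix (Fin m) (Fin m) ℝ) (r : ℕ) :
    (Fin m → ℝ) →ₗ[ℝ] (Fin (min r m) → ℝ) :=
  (LinearMap.funLeft ℝ ℝ (fun l : Fin (min r m) =>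
    (⟨(l : ℕ), lt_of_lt_of_le l.isLt (min_le_right r m)⟩ : Fin m))).comp (Matrix.mulVecLin Vᵀ)

lemma coordMap_zero {m : ℕ} (V : Matrix (Fin m) (Fin m) ℝ) (r : ℕ) (v : Fin m → ℝ)
    (h : coordMap V r v = 0) : ∀ l : Fin m, (l : ℕ) < r → (Vᵀ *ᵥ v) l = 0 := by
  intro l hl
  have hlm : (l : ℕ) < min r m := lt_min hl l.isLt
  have h2 := congrFun h ⟨(l : ℕ), hlm⟩
  simp only [coordMap, LinearMap.comp_apply, LinearMap.funLeft_apply, Matrix.mulVecLin_apply,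
    Pi.zero_apply] at h2
  have hidx : (⟨(l : ℕ), lt_of_lt_of_le hlm (min_le_right r m)⟩ : Fin m) = l := by
    ext; simp
  rwa [hidx] at h2

lemma coordMap_finrank (r m : ℕ) :
    Module.finrank ℝ (Fin (min r m) → ℝ) = min r m := by
  rw [Module.finrank_fintype_fun_eq_card, Fintype.card_fin]

lemma sv_quad_bound {n m : ℕ} {X : Matrix (Fin n) (Fin m) ℝ} {VX : Matrix (Fin m) (Fin m) ℝ}
    (hX2 : VX * VXᵀ = 1)
    (hXdec : Xᵀ * X = VX * Matrix.diagonal (fun j : Fin m => sv X (j : ℕ) ^ 2) * VXᵀ)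
    (i : ℕ) (v : Fin m → ℝ) (hvX : ∀ l : Fin m, (l : ℕ) < i → (VXᵀ *ᵥ v) l = 0) :
    Real.sqrt ((X *ᵥ v) ⬝ᵥ (X *ᵥ v)) ≤ sv X i * Real.sqrt (v ⬝ᵥ v) := by
  have hq := quad_eq hXdec v
  have hcd := dot_self_of_coords hX2 v
  have hsum : (X *ᵥ v) ⬝ᵥ (X *ᵥ v) ≤ sv X i ^ 2 * (v ⬝ᵥ v) := by
    rw [hq, hcd, Finset.mul_sum]
    refine Finset.sum_le_sum fun l _ => ?_
    rcases lt_or_ge (l : ℕ) i with h | h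
    · rw [hvX l h]; simp
    · have h2 : sv X (l : ℕ) ^ 2 ≤ sv X i ^ 2 :=
        pow_le_pow_left₀ (sv_nonneg _ _) (sv_antitone X h) 2
      nlinarith [sq_nonneg ((VXᵀ *ᵥ v) l)]
  calc Real.sqrt ((X *ᵥ v) ⬝ᵥ (X *ᵥ v)) ≤ Real.sqrt (sv X i ^ 2 * (v ⬝ᵥ v)) :=
        Real.sqrt_le_sqrt hsum
    _ = sv X i * Real.sqrt (v ⬝ᵥ v) := by
        rw [Real.sqrt_mul (sq_nonneg _), Real.sqrt_sq (sv_nonneg _ _)]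

/-- Weyl's inequality for singular values. -/
lemma sv_add_le {n m : ℕ} (X Y A : Matrix (Fin n) (Fin m) ℝ) (hA : A = X + Y) (i j : ℕ) :
    sv A (i + j) ≤ sv X i + sv Y j := by
  obtain ⟨VX, hX1, hX2, hXdec⟩ := svd_decomp X
  obtain ⟨VY, hY1, hY2, hYdec⟩ := svd_decomp Y
  have hc : 0 ≤ sv X i + sv Y j := add_nonneg (sv_nonneg _ _) (sv_nonneg _ _)
  refine sv_le_bound A (i + j) _ hc ((coordMap VX i).prod (coordMap VY j)) ?_ ?_
  · rw [Module.finrank_prod, coordMap_finrank, coordMap_finrank]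
    omega
  · intro v hv
    have hvX : coordMap VX i v = 0 := by
      have := congrArg Prod.fst hv
      simpa [LinearMap.prod_apply] using this
    have hvY : coordMap VY j v = 0 := by
      have := congrArg Prod.snd hv
      simpa [LinearMap.prod_apply] using this
    have bX := sv_quad_bound hX2 hXdec i v (coordMap_zero VX i v hvX)
    have bY := sv_quad_bound hY2 hYdec j v (coordMap_zero VY j v hvY)
    have tri : Real.sqrt ((A *ᵥ v) ⬝ᵥ (A *ᵥ v))
        ≤ Real.sqrt ((X *ᵥ v) ⬝ᵥ (X *ᵥ v)) + Real.sqrt ((Y *ᵥ v) ⬝ᵥ (Y *ᵥ v)) := by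
      rw [hA, Matrix.add_mulVec]
      exact dot_norm_add_le _ _
    rw [add_mul]
    linarith

lemma sv_eq_zero_of_ge {n m : ℕ} (M : Matrix (Fin n) (Fin m) ℝ) {k : ℕ} (hk : n ≤ k) :
    sv M k = 0 := by
  refine le_antisymm ?_ (sv_nonneg M k)
  refine sv_le_bound M k 0 le_rfl (Matrix.mulVecLin M) ?_ ?_
  · rw [Module.finrank_fintype_fun_eq_card, Fintype.card_fin]; exact hk
  · intro v hv
    rw [Matrix.mulVecLin_apply] at hv
    rw [hv]
    simp

lemma sv_eq_zero_of_support {n m : ℕ} {N : Matrix (Fin n) (Fin m) ℝ}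
    {V : Matrix (Fin m) (Fin m) ℝ} {d : Fin m → ℝ}
    (hdec : Nᵀ * N = V * Matrix.diagonal d * Vᵀ) (R : ℕ)
    (hsupp : ∀ j : Fin m, R ≤ (j : ℕ) → d j = 0) : sv N R = 0 := by
  refine le_antisymm ?_ (sv_nonneg _ _)
  refine sv_le_bound N R 0 le_rfl (coordMap V R) ?_ ?_
  · rw [coordMap_finrank]; exact min_le_left _ _
  · intro v hv
    have h1 := quad_eq hdec v
    have h2 : (N *ᵥ v) ⬝ᵥ (N *ᵥ v) = 0 := by
      rw [h1]
      refine Finset.sum_eq_zero fun l _ => ?_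
      rcases lt_or_ge (l : ℕ) R with h | h
      · rw [coordMap_zero V R v hv l h]
        simp
      · rw [hsupp l h]
        simp
    rw [h2]
    simp

lemma sum_sv_sq {n m : ℕ} (X : Matrix (Fin n) (Fin m) ℝ) :
    ∑ j : Fin m, sv X (j : ℕ) ^ 2 = frob X ^ 2 := by
  obtain ⟨V, hV1, hV2, hdec⟩ := svd_decomp X
  have h1 : frob X ^ 2 = Matrix.trace (Xᵀ * X) := by
    rw [frob_sq, Matrix.trace]
    rw [Finset.sum_comm]
    refine Finset.sum_congr rfl fun j _ => ?_
    simp [Matrix.diag, Matrix.mul_apply, pow_two]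
  have h2 : Matrix.trace (Xᵀ * X) = ∑ j : Fin m, sv X (j : ℕ) ^ 2 := by
    rw [hdec, Matrix.trace_mul_comm (V * Matrix.diagonal _) Vᵀ, ← Matrix.mul_assoc, hV1,
      Matrix.one_mul, Matrix.trace_diagonal]
  rw [h1, ← h2]

lemma sum_sv_sq_le_frob_sq {n m : ℕ} (X : Matrix (Fin n) (Fin m) ℝ) {r : ℕ} (hr : r ≤ m) :
    ∑ l ∈ Finset.range r, sv X l ^ 2 ≤ frob X ^ 2 := by
  rw [← sum_sv_sq X, Fin.sum_univ_eq_sum_range (fun l => sv X l ^ 2) m]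
  exact Finset.sum_le_sum_of_subset_of_nonneg
    (Finset.range_subset_range.mpr hr) (fun l _ _ => sq_nonneg _)

end SVDProof
end Chunk5
section Chunk6
open Matrix BigOperators Finset
namespace SVDProof

lemma rearrange {s t : ℕ → ℝ} (hs : ∀ {i j : ℕ}, i ≤ j → s j ≤ s i) (hs0 : ∀ i, 0 ≤ s i)
    (ht0 : ∀ i, 0 ≤ t i) (ht1 : ∀ i, t i ≤ 1) (R N : ℕ)
    (htsum : ∑ i ∈ Finset.Ico R N, t i ≤ (R : ℝ)) :
    ∑ i ∈ Finset.Ico R N, s i * t i ≤ ∑ k ∈ Finset.Ico R (R + R), s k := by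
  rcases le_or_gt N (R + R) with h | h
  · calc ∑ i ∈ Finset.Ico R N, s i * t i ≤ ∑ i ∈ Finset.Ico R N, s i :=
        Finset.sum_le_sum (fun i _ => by nlinarith [hs0 i, ht0 i, ht1 i])
      _ ≤ ∑ k ∈ Finset.Ico R (R + R), s k :=
        Finset.sum_le_sum_of_subset_of_nonneg (Finset.Ico_subset_Ico le_rfl h)
          (fun i _ _ => hs0 i)
  · have hsplit : ∑ i ∈ Finset.Ico R (R+R), s i * t i + ∑ i ∈ Finset.Ico (R+R) N, s i * t i
        = ∑ i ∈ Finset.Ico R N, s i * t i :=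
      Finset.sum_Ico_consecutive _ (by omega) (by omega)
    have hsplitT : ∑ i ∈ Finset.Ico R (R+R), t i + ∑ i ∈ Finset.Ico (R+R) N, t i
        = ∑ i ∈ Finset.Ico R N, t i :=
      Finset.sum_Ico_consecutive _ (by omega) (by omega)
    have h1 : ∑ i ∈ Finset.Ico (R+R) N, s i * t i
        ≤ s (R+R) * ∑ i ∈ Finset.Ico (R+R) N, t i := by
      rw [Finset.mul_sum]
      refine Finset.sum_le_sum fun i hi => ?_
      have hiR : R + R ≤ i := (Finset.mem_Ico.mp hi).1
      have hsi := hs hiR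
      nlinarith [ht0 i]
    have h2 : ∑ i ∈ Finset.Ico (R+R) N, t i ≤ (R:ℝ) - ∑ i ∈ Finset.Ico R (R+R), t i := by
      have := hsplitT
      linarith
    have hcard : ((Finset.Ico R (R+R)).card : ℝ) = (R : ℝ) := by
      rw [Nat.card_Ico]
      simp
    have h3 : (R:ℝ) - ∑ i ∈ Finset.Ico R (R+R), t i
        = ∑ i ∈ Finset.Ico R (R+R), (1 - t i) := by
      rw [Finset.sum_sub_distrib, Finset.sum_const, nsmul_eq_mul, mul_one, hcard]
    have h4 : ∑ i ∈ Finset.Ico R N, s i * t i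
        ≤ ∑ i ∈ Finset.Ico R (R+R), (s i * t i + s (R+R) * (1 - t i)) := by
      rw [Finset.sum_add_distrib, ← Finset.mul_sum, ← h3, ← hsplit]
      have h5 : s (R+R) * ∑ i ∈ Finset.Ico (R+R) N, t i
          ≤ s (R+R) * ((R:ℝ) - ∑ i ∈ Finset.Ico R (R+R), t i) :=
        mul_le_mul_of_nonneg_left h2 (hs0 _)
      linarith
    refine h4.trans (Finset.sum_le_sum fun i hi => ?_)
    have hi2 := hs (le_of_lt (Finset.mem_Ico.mp hi).2)
    nlinarith [ht0 i, ht1 i, hs0 i]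

lemma mulVec_dot_le_of_contraction {n m : ℕ} {H : Matrix (Fin n) (Fin m) ℝ} {e : Fin n → ℝ}
    (hHH : H * Hᵀ = Matrix.diagonal e) (he0 : ∀ i, 0 ≤ e i) (he1 : ∀ i, e i ≤ 1)
    (x : Fin m → ℝ) : (H *ᵥ x) ⬝ᵥ (H *ᵥ x) ≤ x ⬝ᵥ x := by
  set y := H *ᵥ x with hy
  have hyy : y ⬝ᵥ y = x ⬝ᵥ (Hᵀ *ᵥ y) := by
    rw [dot_sandwich Hᵀ x y, Matrix.transpose_transpose, ← hy]
  have hw : (Hᵀ *ᵥ y) ⬝ᵥ (Hᵀ *ᵥ y) ≤ y ⬝ᵥ y := by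
    have h1 : y ⬝ᵥ (H *ᵥ (Hᵀ *ᵥ y)) = (Hᵀ *ᵥ y) ⬝ᵥ (Hᵀ *ᵥ y) := dot_sandwich H y (Hᵀ *ᵥ y)
    rw [← h1, Matrix.mulVec_mulVec, hHH]
    have h2 : y ⬝ᵥ (Matrix.diagonal e *ᵥ y) = ∑ i, e i * y i ^ 2 := by
      unfold dotProduct
      refine Finset.sum_congr rfl fun i _ => ?_
      rw [Matrix.mulVec_diagonal]
      ring
    rw [h2]
    have h3 : y ⬝ᵥ y = ∑ i, y i ^ 2 := by simp [dotProduct, pow_two]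
    rw [h3]
    refine Finset.sum_le_sum fun i _ => ?_
    nlinarith [sq_nonneg (y i), he0 i, he1 i]
  have hcs : y ⬝ᵥ y ≤ Real.sqrt (x ⬝ᵥ x) * Real.sqrt ((Hᵀ *ᵥ y) ⬝ᵥ (Hᵀ *ᵥ y)) := by
    rw [hyy]
    exact dot_le_sqrt x (Hᵀ *ᵥ y)
  have h6 : Real.sqrt ((Hᵀ *ᵥ y) ⬝ᵥ (Hᵀ *ᵥ y)) ≤ Real.sqrt (y ⬝ᵥ y) := Real.sqrt_le_sqrt hw
  have h7 : y ⬝ᵥ y ≤ Real.sqrt (x ⬝ᵥ x) * Real.sqrt (y ⬝ᵥ y) := by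
    calc y ⬝ᵥ y ≤ Real.sqrt (x ⬝ᵥ x) * Real.sqrt ((Hᵀ *ᵥ y) ⬝ᵥ (Hᵀ *ᵥ y)) := hcs
      _ ≤ Real.sqrt (x ⬝ᵥ x) * Real.sqrt (y ⬝ᵥ y) :=
        mul_le_mul_of_nonneg_left h6 (Real.sqrt_nonneg _)
  have hsy : Real.sqrt (y ⬝ᵥ y) ^ 2 = y ⬝ᵥ y := Real.sq_sqrt (dot_self_nonneg y)
  have hsx : Real.sqrt (x ⬝ᵥ x) ^ 2 = x ⬝ᵥ x := Real.sq_sqrt (dot_self_nonneg x)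
  rcases eq_or_lt_of_le (Real.sqrt_nonneg (y ⬝ᵥ y)) with h0 | h0
  · rw [← hsy, ← h0]
    simpa using dot_self_nonneg x
  · have h8 : Real.sqrt (y ⬝ᵥ y) ≤ Real.sqrt (x ⬝ᵥ x) := by
      have := h7
      rw [← hsy] at this
      nlinarith
    calc y ⬝ᵥ y = Real.sqrt (y ⬝ᵥ y) ^ 2 := hsy.symm
      _ ≤ Real.sqrt (x ⬝ᵥ x) ^ 2 := pow_le_pow_left₀ (Real.sqrt_nonneg _) h8 2
      _ = x ⬝ᵥ x := hsx

end SVDProof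
end Chunk6
section Chunk7
open Matrix BigOperators Finset
namespace SVDProof

lemma sv_eq_zero_of_ge_min {n m : ℕ} (M : Matrix (Fin n) (Fin m) ℝ) {k : ℕ}
    (hk : min n m ≤ k) : sv M k = 0 := by
  rcases min_le_iff.mp hk with h | h
  · exact sv_eq_zero_of_ge M h
  · rw [sv, dif_neg]
    rw [Fintype.card_fin]
    omega

lemma sum_fin_ite {n : ℕ} (R : ℕ) (f : ℕ → ℝ) :
    ∑ i : Fin n, (if R ≤ (i : ℕ) then f (i : ℕ) else 0) = ∑ k ∈ Finset.Ico R n, f k := by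
  rw [Fin.sum_univ_eq_sum_range (fun k => if R ≤ k then f k else 0) n, ← Finset.sum_filter]
  congr 1
  ext k
  simp [Finset.mem_Ico, Finset.mem_filter, and_comm]

lemma sum_fin_indicator_le {m : ℕ} (R : ℕ) :
    ∑ j : Fin m, (if (j : ℕ) < R then (1:ℝ) else 0) ≤ (R : ℝ) := by
  rw [Finset.sum_boole]
  have h : (Finset.univ.filter (fun j : Fin m => (j : ℕ) < R)).card ≤ (Finset.range R).card := by
    apply Finset.card_le_card_of_injOn (fun j : Fin m => (j : ℕ))
    · intro j hj
      simp only [Finset.mem_coe, Finset.mem_filter] at hj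
      simpa [Finset.mem_range] using hj.2
    · intro a _ b _ hab
      exact Fin.ext hab
  rw [Finset.card_range] at h
  exact_mod_cast h

lemma frob_sandwich_eq {n m : ℕ} {W : Matrix (Fin n) (Fin n) ℝ} {V : Matrix (Fin m) (Fin m) ℝ}
    (hW : Wᵀ * W = 1) (hV1 : Vᵀ * V = 1) (X : Matrix (Fin n) (Fin m) ℝ) :
    frob (W * (X * Vᵀ)) = frob X := by
  rw [frob_mul_left_orth hW, frob_mul_right_orth (V := Vᵀ)
    (by rw [Matrix.transpose_transpose]; exact hV1)]

end SVDProof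
end Chunk7

open SVDProof in
/-- let `A = B + Z`, and let `W` be an orthogonal eigenbasis of
`AAᵀ` ordered by decreasing eigenvalue (so that the first `R` columns of `W`
span the top-`R` left singular subspace of `A`).  With
`P = W diag(1_{i ≥ R}) Wᵀ` the projection onto the orthogonal complement of
that subspace, `‖P B‖_F ≤ 3 √(∑_{j>R} σⱼ²(B)) + 2 min{√R ‖Z‖, ‖Z‖_F}`. -/
theorem projection_perturbation_bound {n m : ℕ} (B Z : Matrix (Fin n) (Fin m) ℝ)
    (R : ℕ) (hR1 : 1 ≤ R) (hR : R ≤ min n m)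
    (W : Matrix (Fin n) (Fin n) ℝ) (hW : Wᵀ * W = 1)
    (hGram : (B + Z) * (B + Z)ᵀ * W =
      W * Matrix.diagonal (fun i : Fin n => sv (B + Z) (i : ℕ) ^ 2)) :
    frob ((W * Matrix.diagonal (fun i : Fin n => if R ≤ (i : ℕ) then (1 : ℝ) else 0) * Wᵀ) * B)
      ≤ 3 * Real.sqrt (∑ j ∈ Finset.Ico R (min n m), sv B j ^ 2)
        + 2 * min (Real.sqrt R * sv Z 0) (frob Z) := by
  classical
  obtain ⟨V, hV1, hV2, hBdec⟩ := svd_decomp B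
  obtain ⟨VZ, hZ1, hZ2, hZdec⟩ := svd_decomp Z
  have hW2 : W * Wᵀ = 1 := mul_eq_one_comm.mp hW
  set A := B + Z with hA
  set χ : Fin n → ℝ := fun i => if R ≤ (i : ℕ) then (1:ℝ) else 0 with hχ
  set ψ : Fin m → ℝ := fun j => if (j : ℕ) < R then (1:ℝ) else 0 with hψ
  have hχ0 : ∀ i, 0 ≤ χ i := fun i => by rw [hχ]; dsimp only; split <;> norm_num
  have hχ1 : ∀ i, χ i ≤ 1 := fun i => by rw [hχ]; dsimp only; split <;> norm_num
  have hψ0 : ∀ j, 0 ≤ ψ j := fun j => by rw [hψ]; dsimp only; split <;> norm_num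
  have hψ1 : ∀ j, ψ j ≤ 1 := fun j => by rw [hψ]; dsimp only; split <;> norm_num
  set G : Matrix (Fin n) (Fin m) ℝ := Wᵀ * A * V with hG
  set tailsum : ℝ := ∑ j ∈ Finset.Ico R (min n m), sv B j ^ 2 with htailsum
  have htail0 : 0 ≤ tailsum := Finset.sum_nonneg fun _ _ => sq_nonneg _
  set z := sv Z 0 with hz
  have hz0 : 0 ≤ z := sv_nonneg Z 0
  set mn : ℝ := min (Real.sqrt R * z) (frob Z) with hmn
  have hmn0 : 0 ≤ mn := le_min (mul_nonneg (Real.sqrt_nonneg _) hz0) (frob_nonneg Z)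
  have hRm : R ≤ m := hR.trans (min_le_right n m)
  clear_value A χ ψ G tailsum z mn
  -- Gram facts
  have hGram' : A * Aᵀ = W * Matrix.diagonal (fun i : Fin n => sv A (i:ℕ)^2) * Wᵀ := by
    rw [← hGram, Matrix.mul_assoc (A * Aᵀ) W Wᵀ, hW2, Matrix.mul_one]
  have hGt : Gᵀ = Vᵀ * (Aᵀ * W) := by
    rw [hG, Matrix.transpose_mul, Matrix.transpose_mul, Matrix.transpose_transpose]
  have hGG : G * Gᵀ = Matrix.diagonal (fun i : Fin n => sv A (i:ℕ)^2) := by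
    calc G * Gᵀ = Wᵀ * A * (V * (Vᵀ * (Aᵀ * W))) := by rw [hGt, hG, Matrix.mul_assoc]
      _ = Wᵀ * A * (Aᵀ * W) := by rw [← Matrix.mul_assoc V Vᵀ, hV2, Matrix.one_mul]
      _ = Wᵀ * (A * Aᵀ * W) := by
          rw [Matrix.mul_assoc Wᵀ A (Aᵀ * W), ← Matrix.mul_assoc A Aᵀ W]
      _ = Wᵀ * (W * Matrix.diagonal (fun i : Fin n => sv A (i:ℕ)^2)) := by rw [hGram]
      _ = Matrix.diagonal (fun i : Fin n => sv A (i:ℕ)^2) := by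
          rw [← Matrix.mul_assoc, hW, Matrix.one_mul]
  have hrow : ∀ i : Fin n, ∑ j, G i j ^ 2 = sv A (i:ℕ) ^ 2 := by
    intro i
    have h1 : (G * Gᵀ) i i = Matrix.diagonal (fun i : Fin n => sv A (i:ℕ)^2) i i := by rw [hGG]
    rw [Matrix.diagonal_apply_eq] at h1
    rw [← h1]
    simp [Matrix.mul_apply, Matrix.transpose_apply, pow_two]
  set dinv : Fin n → ℝ := fun i => if sv A (i:ℕ) = 0 then 0 else (sv A (i:ℕ))⁻¹ with hdinv
  set H : Matrix (Fin n) (Fin m) ℝ := Matrix.diagonal dinv * G with hH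
  clear_value H
  have hGzero : ∀ i : Fin n, sv A (i:ℕ) = 0 → ∀ j, G i j = 0 := by
    intro i h0 j
    have h1 := hrow i
    rw [h0] at h1
    norm_num at h1
    have h2 := (Finset.sum_eq_zero_iff_of_nonneg
      (fun j _ => sq_nonneg (G i j))).mp h1 j (Finset.mem_univ j)
    exact pow_eq_zero_iff two_ne_zero |>.mp h2
  have hGH : ∀ i j, G i j = sv A (i:ℕ) * H i j := by
    intro i j
    rw [hH, Matrix.diagonal_mul, hdinv]
    dsimp only
    by_cases h0 : sv A (i:ℕ) = 0
    · rw [if_pos h0, h0, hGzero i h0 j]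
      ring
    · rw [if_neg h0]
      field_simp
  have hHt : Hᵀ = Gᵀ * Matrix.diagonal dinv := by
    rw [hH, Matrix.transpose_mul, Matrix.diagonal_transpose]
  have hHH : H * Hᵀ = Matrix.diagonal (fun i : Fin n => if sv A (i:ℕ) = 0 then (0:ℝ) else 1) := by
    calc H * Hᵀ = Matrix.diagonal dinv * (G * Gᵀ) * Matrix.diagonal dinv := by
          rw [hH, Matrix.transpose_mul, Matrix.diagonal_transpose,
            Matrix.mul_assoc (Matrix.diagonal dinv) G (Gᵀ * Matrix.diagonal dinv),
            ← Matrix.mul_assoc G Gᵀ (Matrix.diagonal dinv),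
            ← Matrix.mul_assoc (Matrix.diagonal dinv) (G * Gᵀ) (Matrix.diagonal dinv)]
      _ = Matrix.diagonal (fun i : Fin n => if sv A (i:ℕ) = 0 then (0:ℝ) else 1) := by
          rw [hGG, Matrix.diagonal_mul_diagonal, Matrix.diagonal_mul_diagonal]
          refine congrArg Matrix.diagonal (funext fun i => ?_)
          rw [hdinv]
          dsimp only
          by_cases h0 : sv A (i:ℕ) = 0
          · rw [if_pos h0, if_pos h0, h0]
            ring
          · rw [if_neg h0, if_neg h0]
            field_simp
  have he0 : ∀ i : Fin n, (0:ℝ) ≤ if sv A (i:ℕ) = 0 then (0:ℝ) else 1 :=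
    fun i => by split <;> norm_num
  have he1 : ∀ i : Fin n, (if sv A (i:ℕ) = 0 then (0:ℝ) else 1) ≤ 1 :=
    fun i => by split <;> norm_num
  have hrowH : ∀ i : Fin n, ∑ j, H i j ^ 2 ≤ 1 := by
    intro i
    have h1 : (H * Hᵀ) i i = (if sv A (i:ℕ) = 0 then (0:ℝ) else 1) := by
      rw [hHH, Matrix.diagonal_apply_eq]
    have h2 : (H * Hᵀ) i i = ∑ j, H i j ^ 2 := by
      simp [Matrix.mul_apply, Matrix.transpose_apply, pow_two]
    rw [← h2, h1]
    exact he1 i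
  have hcolH : ∀ j : Fin m, ∑ i, H i j ^ 2 ≤ 1 := by
    intro j
    have h1 : (fun i => H i j) = H *ᵥ Pi.single j 1 := by
      ext i
      simp [Matrix.mulVec_single]
    have h2 := mulVec_dot_le_of_contraction hHH he0 he1 (Pi.single j 1)
    have h3 : (Pi.single j 1 : Fin m → ℝ) ⬝ᵥ Pi.single j 1 = 1 := by
      rw [dotProduct, Finset.sum_eq_single j]
      · simp
      · intro b _ hb
        simp [Pi.single_eq_of_ne hb]
      · intro hj
        exact absurd (Finset.mem_univ j) hj
    have h4 : ∑ i, H i j ^ 2 = (H *ᵥ Pi.single j 1) ⬝ᵥ (H *ᵥ Pi.single j 1) := by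
      rw [← h1]
      simp [dotProduct, pow_two]
    rw [h4]
    rw [h3] at h2
    exact h2
  -- decomposition of P * B
  set P := W * Matrix.diagonal χ * Wᵀ with hP
  clear_value P
  have hQsum : V * Matrix.diagonal ψ * Vᵀ + V * (1 - Matrix.diagonal ψ) * Vᵀ = 1 := by
    have h1 : V * Matrix.diagonal ψ * Vᵀ + V * (1 - Matrix.diagonal ψ) * Vᵀ
        = V * (Matrix.diagonal ψ + (1 - Matrix.diagonal ψ)) * Vᵀ := by
      rw [Matrix.mul_add V (Matrix.diagonal ψ) (1 - Matrix.diagonal ψ), Matrix.add_mul]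
    rw [h1, add_sub_cancel, Matrix.mul_one, hV2]
  have hPB : P * B = P * A * (V * Matrix.diagonal ψ * Vᵀ)
      - P * Z * (V * Matrix.diagonal ψ * Vᵀ)
      + P * B * (V * (1 - Matrix.diagonal ψ) * Vᵀ) := by
    have h1 : P * A * (V * Matrix.diagonal ψ * Vᵀ) - P * Z * (V * Matrix.diagonal ψ * Vᵀ)
        = P * B * (V * Matrix.diagonal ψ * Vᵀ) := by
      rw [hA, Matrix.mul_add P B Z, Matrix.add_mul]
      abel
    rw [h1, ← Matrix.mul_add, hQsum, Matrix.mul_one]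
  -- C4 : the window bound
  have hT1eq : frob (P * A * (V * Matrix.diagonal ψ * Vᵀ))
      = frob (Matrix.diagonal χ * G * Matrix.diagonal ψ) := by
    have h1 : P * A * (V * Matrix.diagonal ψ * Vᵀ)
        = W * ((Matrix.diagonal χ * G * Matrix.diagonal ψ) * Vᵀ) := by
      rw [hP, hG]
      simp only [Matrix.mul_assoc]
    rw [h1, frob_sandwich_eq hW hV1]
  set t : ℕ → ℝ := fun k =>
    if hk : k < n then ∑ j : Fin m, (if (j:ℕ) < R then H ⟨k,hk⟩ j ^ 2 else 0) else 0 with ht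
  clear_value t
  have ht0 : ∀ k, 0 ≤ t k := by
    intro k
    rw [ht]
    dsimp only
    split
    · refine Finset.sum_nonneg fun j _ => ?_
      split
      · exact sq_nonneg _
      · exact le_rfl
    · exact le_rfl
  have ht1 : ∀ k, t k ≤ 1 := by
    intro k
    rw [ht]
    dsimp only
    split
    · next hk =>
        refine le_trans (Finset.sum_le_sum fun j _ => ?_) (hrowH ⟨k, hk⟩)
        split
        · exact le_rfl
        · exact sq_nonneg _
    · norm_num
  have hfrobsq : frob (Matrix.diagonal χ * G * Matrix.diagonal ψ) ^ 2
      = ∑ i : Fin n, (if R ≤ (i:ℕ) then (sv A (i:ℕ)^2 * t (i:ℕ)) else 0) := by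
    rw [frob_sq]
    refine Finset.sum_congr rfl fun i _ => ?_
    have hentry : ∀ j, (Matrix.diagonal χ * G * Matrix.diagonal ψ) i j = χ i * G i j * ψ j := by
      intro j
      rw [Matrix.mul_diagonal, Matrix.diagonal_mul]
    by_cases hi : R ≤ (i:ℕ)
    · rw [if_pos hi]
      have hχi : χ i = 1 := by rw [hχ]; exact if_pos hi
      have hti : t (i:ℕ) = ∑ j : Fin m, (if (j:ℕ) < R then H i j ^ 2 else 0) := by
        rw [ht]
        dsimp only
        rw [dif_pos i.isLt]
      rw [hti, Finset.mul_sum]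
      refine Finset.sum_congr rfl fun j _ => ?_
      rw [hentry j, hχi, hGH i j]
      by_cases hj : (j:ℕ) < R
      · have hψj : ψ j = 1 := by rw [hψ]; exact if_pos hj
        rw [hψj, if_pos hj]
        ring
      · have hψj : ψ j = 0 := by rw [hψ]; exact if_neg hj
        rw [hψj, if_neg hj]
        ring
    · rw [if_neg hi]
      have hχi : χ i = 0 := by rw [hχ]; exact if_neg hi
      refine Finset.sum_eq_zero fun j _ => ?_
      rw [hentry j, hχi]
      ring
  have htsum : ∑ k ∈ Finset.Ico R n, t k ≤ (R:ℝ) := by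
    have h1 : ∑ k ∈ Finset.Ico R n, t k ≤ ∑ k ∈ Finset.range n, t k :=
      Finset.sum_le_sum_of_subset_of_nonneg
        (by intro k hk; simp only [Finset.mem_range, Finset.mem_Ico] at *; omega)
        (fun k _ _ => ht0 k)
    have h2 : ∑ k ∈ Finset.range n, t k
        = ∑ i : Fin n, ∑ j : Fin m, (if (j:ℕ) < R then H i j ^2 else 0) := by
      rw [← Fin.sum_univ_eq_sum_range t n]
      refine Finset.sum_congr rfl fun i _ => ?_
      rw [ht]
      dsimp only
      rw [dif_pos i.isLt]
    have h3 : ∑ i : Fin n, ∑ j : Fin m, (if (j:ℕ) < R then H i j ^2 else 0)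
        = ∑ j : Fin m, (if (j:ℕ) < R then (∑ i, H i j ^2) else 0) := by
      rw [Finset.sum_comm]
      refine Finset.sum_congr rfl fun j _ => ?_
      split
      · rfl
      · simp
    have h4 : ∑ j : Fin m, (if (j:ℕ) < R then (∑ i, H i j ^2) else 0)
        ≤ ∑ j : Fin m, (if (j:ℕ) < R then (1:ℝ) else 0) := by
      refine Finset.sum_le_sum fun j _ => ?_
      split
      · exact hcolH j
      · exact le_rfl
    calc ∑ k ∈ Finset.Ico R n, t k ≤ ∑ k ∈ Finset.range n, t k := h1
      _ = ∑ j : Fin m, (if (j:ℕ) < R then (∑ i, H i j ^2) else 0) := by rw [h2, h3]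
      _ ≤ ∑ j : Fin m, (if (j:ℕ) < R then (1:ℝ) else 0) := h4
      _ ≤ (R:ℝ) := sum_fin_indicator_le R
  have hwin : frob (Matrix.diagonal χ * G * Matrix.diagonal ψ) ^ 2
      ≤ ∑ k ∈ Finset.Ico R (R + R), sv A k ^ 2 := by
    rw [hfrobsq, sum_fin_ite R (fun k => sv A k ^2 * t k)]
    exact rearrange (fun {i j} hij => pow_le_pow_left₀ (sv_nonneg _ _) (sv_antitone A hij) 2)
      (fun i => sq_nonneg _) ht0 ht1 R n htsum
  have hT1 : frob (P * A * (V * Matrix.diagonal ψ * Vᵀ))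
      ≤ Real.sqrt (∑ k ∈ Finset.Ico R (R+R), sv A k ^2) := by
    rw [hT1eq]
    rw [show frob (Matrix.diagonal χ * G * Matrix.diagonal ψ)
      = Real.sqrt (frob (Matrix.diagonal χ * G * Matrix.diagonal ψ)^2) from
      (Real.sqrt_sq (frob_nonneg _)).symm]
    exact Real.sqrt_le_sqrt hwin
  -- C3 : frob (P * Z * Q) ≤ mn
  have hT2 : frob (P * Z * (V * Matrix.diagonal ψ * Vᵀ)) ≤ mn := by
    have h1 : P * Z * (V * Matrix.diagonal ψ * Vᵀ)
        = W * ((Matrix.diagonal χ * ((Wᵀ * Z * V) * Matrix.diagonal ψ)) * Vᵀ) := by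
      rw [hP]
      simp only [Matrix.mul_assoc]
    rw [h1, frob_sandwich_eq hW hV1]
    have h2 : frob (Matrix.diagonal χ * ((Wᵀ * Z * V) * Matrix.diagonal ψ))
        ≤ frob ((Wᵀ * Z * V) * Matrix.diagonal ψ) := frob_diag_left_le hχ0 hχ1 _
    have h3 : (Wᵀ * Z * V) * Matrix.diagonal ψ = Wᵀ * ((Z * V) * Matrix.diagonal ψ) := by
      simp only [Matrix.mul_assoc]
    have h4 : frob ((Wᵀ * Z * V) * Matrix.diagonal ψ) = frob ((Z * V) * Matrix.diagonal ψ) := by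
      rw [h3, frob_mul_left_orth (W := Wᵀ) (by rw [Matrix.transpose_transpose]; exact hW2)]
    refine h2.trans ?_
    rw [h4]
    have hcolZ : ∀ j : Fin m, ∑ i, ((Z*V) i j)^2 ≤ z^2 := by
      intro j
      have hcv : (fun i => (Z*V) i j) = Z *ᵥ (fun k => V k j) := by
        ext i
        simp [Matrix.mul_apply, Matrix.mulVec, dotProduct]
      have hq := sv_quad_bound hZ2 hZdec 0 (fun k => V k j)
        (fun l hl => absurd hl (Nat.not_lt_zero _))
      have hcolV : (fun k => V k j) ⬝ᵥ (fun k => V k j) = 1 := by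
        have h5 : (Vᵀ * V) j j = (1 : Matrix (Fin m) (Fin m) ℝ) j j := by rw [hV1]
        rw [Matrix.one_apply_eq] at h5
        rw [← h5]
        simp [Matrix.mul_apply, Matrix.transpose_apply, dotProduct]
      rw [hcolV, Real.sqrt_one, mul_one] at hq
      have h6 : (Z *ᵥ (fun k => V k j)) ⬝ᵥ (Z *ᵥ (fun k => V k j)) ≤ z^2 := by
        rw [hz]
        have h7 := pow_le_pow_left₀ (Real.sqrt_nonneg _) hq 2
        rwa [Real.sq_sqrt (dot_self_nonneg _)] at h7
      calc ∑ i, ((Z*V) i j)^2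
          = (Z *ᵥ (fun k => V k j)) ⬝ᵥ (Z *ᵥ (fun k => V k j)) := by
            rw [← hcv]
            simp [dotProduct, pow_two]
        _ ≤ z^2 := h6
    rw [hmn]
    refine le_min ?_ ?_
    · have h5 : frob ((Z*V) * Matrix.diagonal ψ) ^2 ≤ (R:ℝ) * z^2 := by
        rw [frob_sq]
        have hentry : ∀ i j, ((Z*V) * Matrix.diagonal ψ) i j = (Z*V) i j * ψ j :=
          fun i j => Matrix.mul_diagonal ψ (Z*V) i j
        calc ∑ i, ∑ j, (((Z*V) * Matrix.diagonal ψ) i j)^2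
            = ∑ j : Fin m, ∑ i, ((Z*V) i j)^2 * ψ j^2 := by
              rw [Finset.sum_comm]
              refine Finset.sum_congr rfl fun j _ => Finset.sum_congr rfl fun i _ => ?_
              rw [hentry i j]
              ring
          _ ≤ ∑ j : Fin m, (if (j:ℕ) < R then (1:ℝ) else 0) * z^2 := by
              refine Finset.sum_le_sum fun j _ => ?_
              rw [← Finset.sum_mul]
              by_cases hj : (j:ℕ) < R
              · have hψj : ψ j = 1 := by rw [hψ]; exact if_pos hj
                rw [hψj, if_pos hj, one_mul]
                simpa using hcolZ j
              · have hψj : ψ j = 0 := by rw [hψ]; exact if_neg hj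
                rw [hψj, if_neg hj, zero_mul]
                simp
          _ ≤ (R:ℝ) * z^2 := by
              rw [← Finset.sum_mul]
              exact mul_le_mul_of_nonneg_right (sum_fin_indicator_le R) (sq_nonneg z)
      calc frob ((Z*V) * Matrix.diagonal ψ)
          = Real.sqrt (frob ((Z*V) * Matrix.diagonal ψ)^2) :=
            (Real.sqrt_sq (frob_nonneg _)).symm
        _ ≤ Real.sqrt ((R:ℝ) * z^2) := Real.sqrt_le_sqrt h5
        _ = Real.sqrt R * z := by
            rw [Real.sqrt_mul (Nat.cast_nonneg R), Real.sqrt_sq hz0]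
    · calc frob ((Z*V) * Matrix.diagonal ψ) ≤ frob (Z*V) := frob_diag_right_le hψ0 hψ1 _
        _ = frob Z := frob_mul_right_orth hV2 Z
  -- tail equality
  have hBVgram : (B*V)ᵀ * (B*V) = Matrix.diagonal (fun j : Fin m => sv B (j:ℕ)^2) := by
    rw [Matrix.transpose_mul]
    calc Vᵀ * Bᵀ * (B * V) = Vᵀ * (Bᵀ * B * V) := by
          rw [Matrix.mul_assoc Vᵀ Bᵀ (B * V), ← Matrix.mul_assoc Bᵀ B V]
      _ = Vᵀ * (V * Matrix.diagonal (fun j : Fin m => sv B (j:ℕ)^2) * Vᵀ * V) := by rw [hBdec]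
      _ = Vᵀ * (V * Matrix.diagonal (fun j : Fin m => sv B (j:ℕ)^2)) := by
          rw [Matrix.mul_assoc (V * Matrix.diagonal _) Vᵀ V, hV1, Matrix.mul_one]
      _ = Matrix.diagonal (fun j : Fin m => sv B (j:ℕ)^2) := by
          rw [← Matrix.mul_assoc, hV1, Matrix.one_mul]
  have hcolBV : ∀ j : Fin m, ∑ i, ((B*V) i j)^2 = sv B (j:ℕ)^2 := by
    intro j
    have h1 : ((B*V)ᵀ * (B*V)) j j
        = Matrix.diagonal (fun j : Fin m => sv B (j:ℕ)^2) j j := by rw [hBVgram]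
    rw [Matrix.diagonal_apply_eq] at h1
    rw [← h1]
    simp [Matrix.mul_apply, Matrix.transpose_apply, pow_two, mul_comm]
  have hdd : (1 : Matrix (Fin m) (Fin m) ℝ) - Matrix.diagonal ψ
      = Matrix.diagonal (fun j => 1 - ψ j) := by
    rw [← Matrix.diagonal_one, Matrix.diagonal_sub]
  have htaileq : frob (B * V * (1 - Matrix.diagonal ψ)) = Real.sqrt tailsum := by
    rw [frob]
    refine congrArg Real.sqrt ?_
    calc ∑ i, ∑ j, ((B * V * (1 - Matrix.diagonal ψ) : Matrix (Fin n) (Fin m) ℝ) i j)^2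
        = ∑ j : Fin m, ∑ i, ((B*V) i j)^2 * (1 - ψ j)^2 := by
          rw [Finset.sum_comm]
          refine Finset.sum_congr rfl fun j _ => Finset.sum_congr rfl fun i _ => ?_
          rw [hdd, Matrix.mul_diagonal]
          ring
      _ = ∑ j : Fin m, (if R ≤ (j:ℕ) then sv B (j:ℕ)^2 else 0) := by
          refine Finset.sum_congr rfl fun j _ => ?_
          rw [← Finset.sum_mul, hcolBV j]
          by_cases hj : (j:ℕ) < R
          · have hψj : ψ j = 1 := by rw [hψ]; exact if_pos hj
            rw [hψj, if_neg (by omega)]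
            ring
          · have hψj : ψ j = 0 := by rw [hψ]; exact if_neg hj
            rw [hψj, if_pos (by omega)]
            ring
      _ = ∑ k ∈ Finset.Ico R m, sv B k ^2 := sum_fin_ite R (fun k => sv B k ^2)
      _ = tailsum := by
          rw [htailsum]
          symm
          apply Finset.sum_subset
          · exact Finset.Ico_subset_Ico le_rfl (min_le_right n m)
          · intro k hk1 hk2
            simp only [Finset.mem_Ico] at hk1 hk2
            rw [sv_eq_zero_of_ge_min B (by omega)]
            norm_num
  -- C1
  have hT3 : frob (P * B * (V * (1 - Matrix.diagonal ψ) * Vᵀ)) ≤ Real.sqrt tailsum := by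
    have h1 : P * B * (V * (1 - Matrix.diagonal ψ) * Vᵀ)
        = W * ((Matrix.diagonal χ * (Wᵀ * B * V * (1 - Matrix.diagonal ψ))) * Vᵀ) := by
      rw [hP]
      simp only [Matrix.mul_assoc]
    rw [h1, frob_sandwich_eq hW hV1]
    have h2 : frob (Matrix.diagonal χ * (Wᵀ * B * V * (1 - Matrix.diagonal ψ)))
        ≤ frob (Wᵀ * B * V * (1 - Matrix.diagonal ψ)) := frob_diag_left_le hχ0 hχ1 _
    have h3 : Wᵀ * B * V * (1 - Matrix.diagonal ψ) = Wᵀ * (B * V * (1 - Matrix.diagonal ψ)) := by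
      simp only [Matrix.mul_assoc]
    have h4 : frob (Wᵀ * B * V * (1 - Matrix.diagonal ψ))
        = frob (B * V * (1 - Matrix.diagonal ψ)) := by
      rw [h3, frob_mul_left_orth (W := Wᵀ) (by rw [Matrix.transpose_transpose]; exact hW2)]
    refine h2.trans ?_
    rw [h4, htaileq]
  -- F-branch via Eckart–Young style argument
  set N := B * (V * Matrix.diagonal ψ * Vᵀ) with hN
  clear_value N
  have hVcancel : ∀ X : Matrix (Fin m) (Fin m) ℝ, Vᵀ * (V * X) = X := fun X => by
    rw [← Matrix.mul_assoc, hV1, Matrix.one_mul]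
  have hNN : Nᵀ * N
      = V * Matrix.diagonal (fun j : Fin m => if (j:ℕ) < R then sv B (j:ℕ)^2 else 0) * Vᵀ := by
    have hNt : Nᵀ = V * (Matrix.diagonal ψ * (Vᵀ * Bᵀ)) := by
      rw [hN]
      simp only [Matrix.transpose_mul, Matrix.diagonal_transpose, Matrix.transpose_transpose]
      simp only [Matrix.mul_assoc]
    have h1 : Nᵀ * N
        = V * (Matrix.diagonal ψ * (Vᵀ * (Bᵀ * (B * (V * (Matrix.diagonal ψ * Vᵀ)))))) := by
      rw [hNt, hN]
      simp only [Matrix.mul_assoc]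
    have h2 : Bᵀ * (B * (V * (Matrix.diagonal ψ * Vᵀ)))
        = V * (Matrix.diagonal (fun j : Fin m => sv B (j:ℕ)^2)
            * (Vᵀ * (V * (Matrix.diagonal ψ * Vᵀ)))) := by
      rw [← Matrix.mul_assoc Bᵀ B, hBdec]
      simp only [Matrix.mul_assoc]
    rw [h1, h2, hVcancel, hVcancel]
    have hmerge : Matrix.diagonal ψ * (Matrix.diagonal (fun j : Fin m => sv B (j:ℕ)^2)
          * Matrix.diagonal ψ)
        = Matrix.diagonal (fun j : Fin m => if (j:ℕ) < R then sv B (j:ℕ)^2 else 0) := by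
      rw [Matrix.diagonal_mul_diagonal, Matrix.diagonal_mul_diagonal]
      refine congrArg Matrix.diagonal (funext fun j => ?_)
      by_cases hj : (j:ℕ) < R
      · have hψj : ψ j = 1 := by rw [hψ]; exact if_pos hj
        rw [hψj, if_pos hj]
        ring
      · have hψj : ψ j = 0 := by rw [hψ]; exact if_neg hj
        rw [hψj, if_neg hj]
        ring
    rw [← Matrix.mul_assoc (Matrix.diagonal (fun j : Fin m => sv B (j:ℕ)^2))
        (Matrix.diagonal ψ) Vᵀ,
      ← Matrix.mul_assoc (Matrix.diagonal ψ)
        (Matrix.diagonal (fun j : Fin m => sv B (j:ℕ)^2) * Matrix.diagonal ψ) Vᵀ,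
      hmerge, ← Matrix.mul_assoc]
  have hNzero : sv N R = 0 :=
    sv_eq_zero_of_support hNN R (fun j hj => by rw [if_neg (by omega)])
  have hANeq : A - N = B * V * (1 - Matrix.diagonal ψ) * Vᵀ + Z := by
    rw [hA, hN]
    have h1 : B * V * (1 - Matrix.diagonal ψ) * Vᵀ
        = B - B * (V * Matrix.diagonal ψ * Vᵀ) := by
      rw [Matrix.mul_sub (B*V) 1 (Matrix.diagonal ψ), Matrix.mul_one, Matrix.sub_mul,
        Matrix.mul_assoc B V Vᵀ, hV2, Matrix.mul_one]
      congr 1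
      simp only [Matrix.mul_assoc]
    rw [h1]
    abel
  have hAweyl : ∀ l : ℕ, sv A (R + l) ≤ sv (A - N) l := by
    intro l
    have h1 := sv_add_le N (A - N) A (by abel) R l
    rw [hNzero, zero_add] at h1
    exact h1
  have hFbr : Real.sqrt (∑ k ∈ Finset.Ico R (R+R), sv A k ^2)
      ≤ Real.sqrt tailsum + frob Z := by
    have h6 : ∑ k ∈ Finset.Ico R (R+R), sv A k ^2 = ∑ l ∈ Finset.range R, sv A (R + l) ^2 := by
      rw [Finset.sum_Ico_eq_sum_range]
      have : R + R - R = R := by omega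
      rw [this]
    have h7 : ∑ l ∈ Finset.range R, sv A (R+l)^2 ≤ ∑ l ∈ Finset.range R, sv (A - N) l ^2 :=
      Finset.sum_le_sum fun l _ => pow_le_pow_left₀ (sv_nonneg _ _) (hAweyl l) 2
    have h8 := sum_sv_sq_le_frob_sq (A - N) hRm
    have h9 : frob (A - N) ≤ Real.sqrt tailsum + frob Z := by
      rw [hANeq]
      refine (frob_add_le _ _).trans ?_
      have h10 : frob (B * V * (1 - Matrix.diagonal ψ) * Vᵀ) = Real.sqrt tailsum := by
        rw [frob_mul_right_orth (V := Vᵀ) (by rw [Matrix.transpose_transpose]; exact hV1),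
          htaileq]
      rw [h10]
    calc Real.sqrt (∑ k ∈ Finset.Ico R (R+R), sv A k ^2)
        = Real.sqrt (∑ l ∈ Finset.range R, sv A (R + l) ^2) := by rw [h6]
      _ ≤ Real.sqrt (frob (A - N)^2) := Real.sqrt_le_sqrt (h7.trans h8)
      _ = frob (A - N) := Real.sqrt_sq (frob_nonneg _)
      _ ≤ Real.sqrt tailsum + frob Z := h9
  -- op branch
  have hop : Real.sqrt (∑ k ∈ Finset.Ico R (R+R), sv A k ^2)
      ≤ Real.sqrt tailsum + Real.sqrt R * z := by
    have h1 : ∀ k ∈ Finset.Ico R (R+R), sv A k ^2 ≤ (sv B k + z)^2 := by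
      intro k _
      have h2 : sv A k ≤ sv B k + z := by
        rw [hz]
        simpa using sv_add_le B Z A hA k 0
      exact pow_le_pow_left₀ (sv_nonneg _ _) h2 2
    have h3 := sqrt_sum_sq_add_le (Finset.Ico R (R+R)) (fun k => sv B k) (fun _ => z)
    have h4 : ∑ k ∈ Finset.Ico R (R+R), sv B k ^2 ≤ tailsum := by
      have h5 : ∀ k ∈ Finset.Ico R (R+R), sv B k ^2 = if k < min n m then sv B k ^2 else 0 := by
        intro k _
        split
        · rfl
        · next hmin => rw [sv_eq_zero_of_ge_min B (by omega)]; norm_num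
      rw [htailsum, Finset.sum_congr rfl h5, ← Finset.sum_filter]
      refine Finset.sum_le_sum_of_subset_of_nonneg ?_ (fun _ _ _ => sq_nonneg _)
      intro k hk
      simp only [Finset.mem_filter, Finset.mem_Ico] at *
      omega
    have h5 : Real.sqrt (∑ _k ∈ Finset.Ico R (R+R), z ^2) = Real.sqrt R * z := by
      rw [Finset.sum_const, Nat.card_Ico, nsmul_eq_mul]
      have hc : ((R + R - R : ℕ) : ℝ) = (R:ℝ) := by
        have : R + R - R = R := by omega
        rw [this]
      rw [hc, Real.sqrt_mul (Nat.cast_nonneg R), Real.sqrt_sq hz0]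
    calc Real.sqrt (∑ k ∈ Finset.Ico R (R+R), sv A k ^2)
        ≤ Real.sqrt (∑ k ∈ Finset.Ico R (R+R), (sv B k + z) ^2) :=
          Real.sqrt_le_sqrt (Finset.sum_le_sum h1)
      _ ≤ Real.sqrt (∑ k ∈ Finset.Ico R (R+R), sv B k ^2)
          + Real.sqrt (∑ _k ∈ Finset.Ico R (R+R), z ^2) := h3
      _ ≤ Real.sqrt tailsum + Real.sqrt R * z := by
          rw [h5]
          exact add_le_add_left (Real.sqrt_le_sqrt h4) _
  have hwin2 : Real.sqrt (∑ k ∈ Finset.Ico R (R+R), sv A k ^2) ≤ Real.sqrt tailsum + mn := by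
    rcases le_total (Real.sqrt R * z) (frob Z) with h | h
    · rw [hmn, min_eq_left h]
      exact hop
    · rw [hmn, min_eq_right h]
      exact hFbr
  -- assemble
  have hsplit : frob (P * B) ≤ frob (P * A * (V * Matrix.diagonal ψ * Vᵀ))
      + frob (P * Z * (V * Matrix.diagonal ψ * Vᵀ))
      + frob (P * B * (V * (1 - Matrix.diagonal ψ) * Vᵀ)) := by
    conv_lhs => rw [hPB]
    refine (frob_add_le _ _).trans ?_
    have h1 : frob (P * A * (V * Matrix.diagonal ψ * Vᵀ)
          - P * Z * (V * Matrix.diagonal ψ * Vᵀ))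
        ≤ frob (P * A * (V * Matrix.diagonal ψ * Vᵀ))
          + frob (P * Z * (V * Matrix.diagonal ψ * Vᵀ)) := by
      rw [sub_eq_add_neg]
      refine (frob_add_le _ _).trans ?_
      rw [frob_neg]
    linarith
  have hfinal := hT1.trans hwin2
  have hsqrt0 : 0 ≤ Real.sqrt tailsum := Real.sqrt_nonneg _
  linarith [hsplit, hfinal, hT2, hT3]
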